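/- Let L be a simple finite-dimensional anticommutative algebra over a field F of characteristic zero with a comultiplication Δ such that the Drinfeld double D(L) is anticommutative and is a direct sum L₁ ⊕ L₂ of two proper simple ideals. Let φ₁, φ₂ : L* → L be the linear maps with f − φᵢ(f) ∈ Lᵢ for all f ∈ L*, let ψ : L → L* be the linear bijection with a = −φ₁(ψ(a)) + φ₂(ψ(a)) for all a ∈ L, and let R = φ₁ ∘ ψ. Then there exist a non skew-symmetric solution r = Σᵢ aᵢ⊗bᵢ of the classical Yang–Baxter equation on L such that r + τ(r) is L-invariant, and a non-degenerate symmetric associative bilinear form ω on L, such that R(a) = Σᵢ ω(aᵢ, a)·bᵢ for all a ∈ L. -/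

import Mathlib

open TensorProduct

/-- `I` is a (two-sided) ideal for the product `prod`. -/
def IsIdealP {F M : Type*} [Field F] [AddCommGroup M] [Module F M]
    (prod : M → M → M) (I : Submodule F M) : Prop :=
  ∀ x ∈ I, ∀ y : M, prod x y ∈ I ∧ prod y x ∈ I

/-- The ideal `I` is simple as an algebra with the restricted product. -/
def IsSimpleIdealP {F M : Type*} [Field F] [AddCommGroup M] [Module F M]
    (prod : M → M → M) (I : Submodule F M) : Prop :=
  (∃ x ∈ I, ∃ y ∈ I, prod x y ≠ 0) ∧
    ∀ J : Submodule F M, J ≤ I →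
      (∀ x ∈ J, ∀ y ∈ I, prod x y ∈ J ∧ prod y x ∈ J) → J = ⊥ ∨ J = I

/-- The multiplication of the Drinfeld double `D(A) = A ⊕ A*` associated with the
bilinear product `mul` and the comultiplication `Δ`:
`(a + f)(b + g) = (ab + f⇀b + a↼g) + (fg + f⇽b + a⇁g)`. -/
noncomputable def dmul {F A : Type*} [Field F] [AddCommGroup A] [Module F A]
    (mul : A →ₗ[F] A →ₗ[F] A) (Δ : A →ₗ[F] A ⊗[F] A)
    (p q : A × Module.Dual F A) : A × Module.Dual F A :=
  (mul p.1 q.1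
      + TensorProduct.rid F A (LinearMap.lTensor A p.2 (Δ q.1))
      + TensorProduct.lid F A (LinearMap.rTensor A q.2 (Δ p.1)),
    Δ.dualMap (TensorProduct.dualDistrib F A A (p.2 ⊗ₜ[F] q.2))
      + p.2.comp (mul q.1)
      + q.2.comp (mul.flip p.1))

/-- The classical Yang–Baxter equation for `r = ∑ i, a i ⊗ b i`. -/
def CYBE {F L : Type*} [Field F] [AddCommGroup L] [Module F L]
    (mul : L →ₗ[F] L →ₗ[F] L) {n : ℕ} (a b : Fin n → L) : Prop :=
  ∑ i : Fin n, ∑ j : Fin n,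
      (mul (a i) (a j) ⊗ₜ[F] (b i ⊗ₜ[F] b j)
        - a i ⊗ₜ[F] (mul (a j) (b i) ⊗ₜ[F] b j)
        + a i ⊗ₜ[F] (a j ⊗ₜ[F] mul (b i) (b j))) = 0

/-- The natural pairing on `L ⊕ L*`. -/
def Qf {F L : Type*} [Field F] [AddCommGroup L] [Module F L]
    (p q : L × Module.Dual F L) : F := p.2 q.1 + q.2 p.1

section Aux
variable {F L : Type*} [Field F] [AddCommGroup L] [Module F L]

lemma aux1 (f g : Module.Dual F L) (t : L ⊗[F] L) :
    f (TensorProduct.rid F L (LinearMap.lTensor L g t))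
      = TensorProduct.dualDistrib F L L (f ⊗ₜ[F] g) t := by
  induction t using TensorProduct.induction_on with
  | zero => simp
  | tmul a b => simp [mul_comm]
  | add x y hx hy => simp [map_add, hx, hy]

lemma aux2 (f g : Module.Dual F L) (t : L ⊗[F] L) :
    g (TensorProduct.lid F L (LinearMap.rTensor L f t))
      = TensorProduct.dualDistrib F L L (f ⊗ₜ[F] g) t := by
  induction t using TensorProduct.induction_on with
  | zero => simp
  | tmul a b => simp
  | add x y hx hy => simp [map_add, hx, hy]

variable (mul : L →ₗ[F] L →ₗ[F] L) (Δ : L →ₗ[F] L ⊗[F] L)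

lemma Qf_assoc (p q r : L × Module.Dual F L) :
    Qf (dmul mul Δ p q) r = Qf p (dmul mul Δ q r) := by
  simp only [Qf, dmul, LinearMap.add_apply, LinearMap.dualMap_apply,
    LinearMap.coe_comp, Function.comp_apply, LinearMap.flip_apply, map_add]
  rw [aux1 r.2 p.2, aux2 q.2 r.2, aux1 p.2 q.2, aux2 r.2 p.2]
  ring

lemma dmul_add_left (p p' q : L × Module.Dual F L) :
    dmul mul Δ (p + p') q = dmul mul Δ p q + dmul mul Δ p' q := by
  simp only [dmul, Prod.fst_add, Prod.snd_add, map_add, LinearMap.add_apply,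
    LinearMap.lTensor_add, add_tmul, LinearMap.add_comp, LinearMap.comp_add, Prod.mk_add_mk]
  exact Prod.ext (by abel) (by abel)

lemma dmul_add_right (p q q' : L × Module.Dual F L) :
    dmul mul Δ p (q + q') = dmul mul Δ p q + dmul mul Δ p q' := by
  simp only [dmul, Prod.fst_add, Prod.snd_add, map_add, LinearMap.add_apply,
    LinearMap.rTensor_add, tmul_add, LinearMap.add_comp, LinearMap.comp_add, Prod.mk_add_mk]
  exact Prod.ext (by abel) (by abel)

lemma dmul_smul_left (c : F) (p q : L × Module.Dual F L) :
    dmul mul Δ (c • p) q = c • dmul mul Δ p q := by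
  simp only [dmul, Prod.smul_fst, Prod.smul_snd, map_smul, LinearMap.smul_apply,
    LinearMap.lTensor_smul, ← smul_tmul', LinearMap.smul_comp, LinearMap.comp_smul,
    Prod.smul_mk, smul_add, map_smul]

lemma dmul_smul_right (c : F) (p q : L × Module.Dual F L) :
    dmul mul Δ p (c • q) = c • dmul mul Δ p q := by
  simp only [dmul, Prod.smul_fst, Prod.smul_snd, map_smul, LinearMap.smul_apply,
    LinearMap.rTensor_smul, tmul_smul, LinearMap.smul_comp, LinearMap.comp_smul,
    Prod.smul_mk, smul_add, map_smul]

lemma dmul_zero_left (q : L × Module.Dual F L) : dmul mul Δ 0 q = 0 := by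
  simp [dmul, Prod.ext_iff]

lemma dmul_pair (x y : L) : dmul mul Δ (x, (0 : Module.Dual F L)) (y, 0) = (mul x y, 0) := by
  simp [dmul, Prod.ext_iff]

lemma sum_coef_smul {M : Type*} [AddCommGroup M] [Module F M] {n : ℕ}
    (d : Fin n → L) (c : Fin n → F) (w : L) (h : ∑ k, c k • d k = w) (T : L →ₗ[F] M) :
    ∑ k, c k • T (d k) = T w := by
  rw [← h, map_sum]; simp only [map_smul]

end Aux
section Aux2
variable {F L : Type*} [Field F] [AddCommGroup L] [Module F L]

/-- `f ⇀ b`. -/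
noncomputable def HlD (Δ : L →ₗ[F] L ⊗[F] L) (f : Module.Dual F L) (b : L) : L :=
  TensorProduct.rid F L (LinearMap.lTensor L f (Δ b))

/-- `a ↼ g`. -/
noncomputable def HrD (Δ : L →ₗ[F] L ⊗[F] L) (a : L) (g : Module.Dual F L) : L :=
  TensorProduct.lid F L (LinearMap.rTensor L g (Δ a))

variable (mul : L →ₗ[F] L →ₗ[F] L) (Δ : L →ₗ[F] L ⊗[F] L)

lemma dmul_fst (p q : L × Module.Dual F L) :
    (dmul mul Δ p q).1 = mul p.1 q.1 + HlD Δ p.2 q.1 + HrD Δ p.1 q.2 := rfl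

variable (f : Module.Dual F L) (a b b' : L) (g : Module.Dual F L)

lemma HlD_neg_left : HlD Δ (-f) b = -(HlD Δ f b) := by
  simp [HlD, LinearMap.lTensor_neg]
lemma HlD_neg_right : HlD Δ f (-b) = -(HlD Δ f b) := by simp [HlD]
lemma HlD_add_right : HlD Δ f (b + b') = HlD Δ f b + HlD Δ f b' := by simp [HlD]
lemma HrD_neg_left : HrD Δ (-a) g = -(HrD Δ a g) := by simp [HrD]
lemma HrD_add_left : HrD Δ (a + b) g = HrD Δ a g + HrD Δ b g := by simp [HrD]
lemma HrD_neg_right : HrD Δ a (-g) = -(HrD Δ a g) := by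
  simp [HrD, LinearMap.rTensor_neg]

end Aux2
set_option maxHeartbeats 3000000 in
theorem stmt9 {F L : Type*} [Field F] [CharZero F] [AddCommGroup L] [Module F L]
    [FiniteDimensional F L] (mul : L →ₗ[F] L →ₗ[F] L)
    -- `L` is anticommutative
    (hanti : ∀ x : L, mul x x = 0)
    -- `L` is simple
    (hsimple : (∃ x y : L, mul x y ≠ 0) ∧
      ∀ I : Submodule F L, (∀ x ∈ I, ∀ y : L, mul x y ∈ I ∧ mul y x ∈ I) → I = ⊥ ∨ I = ⊤)
    -- a comultiplication on `L`
    (Δ : L →ₗ[F] L ⊗[F] L)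
    -- the Drinfeld double `D(L)` is anticommutative
    (hdanti : ∀ p : L × Module.Dual F L, dmul mul Δ p p = 0)
    -- `D(L) = L₁ ⊕ L₂`, a direct sum of two proper simple ideals
    (L₁ L₂ : Submodule F (L × Module.Dual F L))
    (h1b : L₁ ≠ ⊥) (h1t : L₁ ≠ ⊤) (h2b : L₂ ≠ ⊥) (h2t : L₂ ≠ ⊤)
    (hcompl : IsCompl L₁ L₂)
    (hid1 : IsIdealP (dmul mul Δ) L₁) (hid2 : IsIdealP (dmul mul Δ) L₂)
    (hs1 : IsSimpleIdealP (dmul mul Δ) L₁) (hs2 : IsSimpleIdealP (dmul mul Δ) L₂)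
    -- the linear maps `φᵢ` with `f - φᵢ(f) ∈ Lᵢ` for all `f ∈ L*`
    (φ₁ φ₂ : Module.Dual F L →ₗ[F] L)
    (hφ1 : ∀ f : Module.Dual F L, ((-φ₁ f, f) : L × Module.Dual F L) ∈ L₁)
    (hφ2 : ∀ f : Module.Dual F L, ((-φ₂ f, f) : L × Module.Dual F L) ∈ L₂)
    -- the linear bijection `ψ` with `a = -φ₁(ψ a) + φ₂(ψ a)` for all `a ∈ L`
    (ψ : L →ₗ[F] Module.Dual F L) (hψbij : Function.Bijective ψ)
    (hψ : ∀ c : L, c = -φ₁ (ψ c) + φ₂ (ψ c)) :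
    -- conclusion: `R = φ₁ ∘ ψ` is given by a non skew-symmetric CYBE solution with
    -- `L`-invariant symmetric part, via a nondegenerate symmetric associative form `ω`
    ∃ (n : ℕ) (a b : Fin n → L),
      CYBE mul a b ∧
      (∑ i, b i ⊗ₜ[F] a i ≠ -∑ i, a i ⊗ₜ[F] b i) ∧
      (∀ c : L, ∑ i, (mul (a i) c ⊗ₜ[F] b i + a i ⊗ₜ[F] mul (b i) c
          + mul (b i) c ⊗ₜ[F] a i + b i ⊗ₜ[F] mul (a i) c) = 0) ∧
      ∃ ω : L →ₗ[F] L →ₗ[F] F,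
        (∀ x : L, (∀ y : L, ω x y = 0) → x = 0) ∧
        (∀ x y : L, ω x y = ω y x) ∧
        (∀ x y z : L, ω (mul x y) z = ω x (mul y z)) ∧
        (∀ c : L, φ₁ (ψ c) = ∑ i, ω (a i) c • b i) := by
  classical
  set R : L →ₗ[F] L := φ₁ ∘ₗ ψ with hRdef
  have hRapp : ∀ x, R x = φ₁ (ψ x) := fun _ => rfl
  set θ₁ : L → L × Module.Dual F L := fun x => (-(φ₁ (ψ x)), ψ x) with hθ₁def
  set θ₂ : L → L × Module.Dual F L := fun x => (φ₂ (ψ x), -(ψ x)) with hθ₂def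
  have hθ1mem : ∀ x, θ₁ x ∈ L₁ := fun x => hφ1 (ψ x)
  have hθ2mem : ∀ x, θ₂ x ∈ L₂ := by
    intro x
    have h := hφ2 (-(ψ x))
    simpa [hθ₂def] using h
  have hθsum : ∀ x, θ₁ x + θ₂ x = (x, 0) := by
    intro x
    refine Prod.ext ?_ ?_
    · simpa [hθ₁def, hθ₂def] using (hψ x).symm
    · simp [hθ₁def, hθ₂def]
  have hbot : L₁ ⊓ L₂ = ⊥ := disjoint_iff.mp hcompl.disjoint
  have h12 : ∀ u ∈ L₁, ∀ v ∈ L₂, dmul mul Δ u v = 0 := by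
    intro u hu v hv
    have h : dmul mul Δ u v ∈ L₁ ⊓ L₂ := ⟨(hid1 u hu v).1, (hid2 v hv u).2⟩
    rw [hbot] at h
    simpa using h
  have h21 : ∀ u ∈ L₁, ∀ v ∈ L₂, dmul mul Δ v u = 0 := by
    intro u hu v hv
    have h : dmul mul Δ v u ∈ L₁ ⊓ L₂ := ⟨(hid1 u hu v).2, (hid2 v hv u).1⟩
    rw [hbot] at h
    simpa using h
  -- L₁ is spanned by products
  have horth : ∀ u ∈ L₁, ∀ v ∈ L₂, Qf u v = 0 := by
    set S : Set (L × Module.Dual F L) := {z | ∃ u ∈ L₁, ∃ v ∈ L₁, z = dmul mul Δ u v} with hSdef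
    have hSsub : S ⊆ (L₁ : Set (L × Module.Dual F L)) := by
      rintro z ⟨u, hu, v, hv, rfl⟩
      exact (hid1 u hu v).1
    have hJle : Submodule.span F S ≤ L₁ := Submodule.span_le.mpr hSsub
    have hJideal : ∀ x ∈ Submodule.span F S, ∀ y ∈ L₁,
        dmul mul Δ x y ∈ Submodule.span F S ∧ dmul mul Δ y x ∈ Submodule.span F S := by
      intro x hx y hy
      induction hx using Submodule.span_induction with
      | mem z hz =>
        have hz1 : z ∈ L₁ := hSsub hz
        constructor
        · exact Submodule.subset_span ⟨z, hz1, y, hy, rfl⟩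
        · exact Submodule.subset_span ⟨y, hy, z, hz1, rfl⟩
      | zero =>
        constructor
        · rw [dmul_zero_left]; exact Submodule.zero_mem _
        · rw [show dmul mul Δ y 0 = 0 by
            have := dmul_smul_right mul Δ (0 : F) y 0
            simpa using this]
          exact Submodule.zero_mem _
      | add a b ha hb iha ihb =>
        constructor
        · rw [dmul_add_left]; exact Submodule.add_mem _ iha.1 ihb.1
        · rw [dmul_add_right]; exact Submodule.add_mem _ iha.2 ihb.2
      | smul c a ha iha =>
        constructor
        · rw [dmul_smul_left]; exact Submodule.smul_mem _ _ iha.1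
        · rw [dmul_smul_right]; exact Submodule.smul_mem _ _ iha.2
    have hJne : Submodule.span F S ≠ ⊥ := by
      obtain ⟨x, hx, y, hy, hne⟩ := hs1.1
      intro hJ
      have : dmul mul Δ x y ∈ Submodule.span F S := Submodule.subset_span ⟨x, hx, y, hy, rfl⟩
      rw [hJ, Submodule.mem_bot] at this
      exact hne this
    have hJ : Submodule.span F S = L₁ := (hs1.2 _ hJle hJideal).resolve_left hJne
    intro u hu v hv
    rw [← hJ] at hu
    induction hu using Submodule.span_induction with
    | mem z hz =>
      obtain ⟨a, ha, b, hb, rfl⟩ := hz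
      rw [Qf_assoc, h12 b (hJle (by rw [hJ]; exact hb)) v hv]
      · simp [Qf]
    | zero => simp [Qf]
    | add a b ha hb iha ihb => simp only [Qf, Prod.fst_add, Prod.snd_add, map_add,
        LinearMap.add_apply] at iha ihb ⊢; rw [add_add_add_comm, iha, ihb, add_zero]
    | smul c a ha iha => simp only [Qf, Prod.smul_fst, Prod.smul_snd, map_smul,
        LinearMap.smul_apply, smul_eq_mul] at iha ⊢; rw [← mul_add, iha, mul_zero]
  -- the form
  have hQ1 : ∀ x y, Qf (θ₁ x) (θ₁ y) = ψ x y := by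
    intro x y
    have h0 : Qf (θ₁ x) (θ₁ y + θ₂ y) = ψ x y := by
      rw [hθsum y]
      simp [Qf, hθ₁def]
    have hsplit : Qf (θ₁ x) (θ₁ y + θ₂ y) = Qf (θ₁ x) (θ₁ y) + Qf (θ₁ x) (θ₂ y) := by
      simp only [Qf, Prod.fst_add, Prod.snd_add, map_add, LinearMap.add_apply]
      ring
    rw [hsplit, horth _ (hθ1mem x) _ (hθ2mem y), add_zero] at h0
    exact h0
  have hsymm : ∀ x y, ψ x y = ψ y x := by
    intro x y
    rw [← hQ1 x y, ← hQ1 y x]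
    simp only [Qf]
    ring
  have hadj : ∀ x y, ψ (R x) y + ψ x (R y) = -(ψ x y) := by
    intro x y
    have h := hQ1 x y
    simp only [Qf, hθ₁def, map_neg] at h
    rw [← hRapp, ← hRapp] at h
    have hs := hsymm y (R x)
    rw [← h, hs]
    ring
  -- θ₁ is a homomorphism
  have hhom : ∀ x y, dmul mul Δ (θ₁ x) (θ₁ y) = θ₁ (mul x y) := by
    intro x y
    have e1 : dmul mul Δ (θ₁ x) (θ₂ y) = 0 := h12 _ (hθ1mem x) _ (hθ2mem y)
    have e2 : dmul mul Δ (θ₂ x) (θ₁ y) = 0 := h21 _ (hθ1mem y) _ (hθ2mem x)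
    have hsum : dmul mul Δ (θ₁ x) (θ₁ y) + dmul mul Δ (θ₂ x) (θ₂ y) = (mul x y, 0) := by
      have expand : dmul mul Δ (θ₁ x + θ₂ x) (θ₁ y + θ₂ y)
          = dmul mul Δ (θ₁ x) (θ₁ y) + dmul mul Δ (θ₂ x) (θ₂ y) := by
        rw [dmul_add_left, dmul_add_right, dmul_add_right, e1, e2]
        abel
      rw [← expand, hθsum, hθsum, dmul_pair]
    have key : dmul mul Δ (θ₁ x) (θ₁ y) - θ₁ (mul x y)
        = θ₂ (mul x y) - dmul mul Δ (θ₂ x) (θ₂ y) := by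
      rw [sub_eq_sub_iff_add_eq_add, hsum, add_comm]
      exact (hθsum (mul x y)).symm
    have hmem : dmul mul Δ (θ₁ x) (θ₁ y) - θ₁ (mul x y) ∈ L₁ ⊓ L₂ := by
      constructor
      · exact Submodule.sub_mem _ (hid1 _ (hθ1mem x) _).1 (hθ1mem _)
      · rw [key]
        exact Submodule.sub_mem _ (hθ2mem _) (hid2 _ (hθ2mem x) _).1
    rw [hbot, Submodule.mem_bot] at hmem
    exact sub_eq_zero.mp hmem
  have hassoc : ∀ x y z, ψ (mul x y) z = ψ x (mul y z) := by
    intro x y z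
    rw [← hQ1, ← hQ1, ← hhom x y, ← hhom y z, Qf_assoc]
  -- first-component identities
  have hφ₂R : ∀ y, φ₂ (ψ y) = y + R y := by
    intro y
    have h := hψ y
    rw [hRapp]
    linear_combination (norm := module) -h
  have E1 : ∀ x y, HlD Δ (ψ x) (R y) + HrD Δ (R x) (ψ y)
      = mul (R x) (R y) + R (mul x y) := by
    intro x y
    have h := congrArg Prod.fst (hhom x y)
    rw [dmul_fst] at h
    simp only [hθ₁def, ← hRapp, map_neg, LinearMap.neg_apply, neg_neg,
      HlD_neg_right, HrD_neg_left] at h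
    linear_combination (norm := module) -h
  have E3 : ∀ x y, HlD Δ (ψ x) y = mul (R x) y - R (mul x y) := by
    intro x y
    have h := congrArg Prod.fst (h12 _ (hθ1mem x) _ (hθ2mem y))
    rw [dmul_fst] at h
    simp only [hθ₁def, hθ₂def, Prod.fst_zero] at h
    rw [hφ₂R y] at h
    simp only [← hRapp, map_neg, map_add, LinearMap.neg_apply, LinearMap.add_apply, neg_neg,
      HlD_neg_right, HlD_add_right, HrD_neg_left, HrD_neg_right] at h
    have h1 := E1 x y
    linear_combination (norm := module) h - h1
  have E4 : ∀ x y, HrD Δ x (ψ y) = mul x (R y) - R (mul x y) := by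
    intro x y
    have h := congrArg Prod.fst (h21 _ (hθ1mem y) _ (hθ2mem x))
    rw [dmul_fst] at h
    simp only [hθ₁def, hθ₂def, Prod.fst_zero] at h
    rw [hφ₂R x] at h
    simp only [← hRapp, map_neg, map_add, LinearMap.neg_apply, LinearMap.add_apply, neg_neg,
      HlD_neg_left, HlD_neg_right, HrD_add_left, HrD_neg_right] at h
    have h1 := E1 x y
    linear_combination (norm := module) h - h1
  have hRB : ∀ x y, mul (R x) (R y) = R (mul (R x) y + mul x (R y) + mul x y) := by
    intro x y
    have h1 := E1 x y
    have h3 := E3 x (R y)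
    have h4 := E4 (R x) y
    rw [map_add, map_add]
    linear_combination (norm := module) h1 - h3 - h4
  have hanti2 : ∀ x y, mul x y = -(mul y x) := by
    intro x y
    have h := hanti (x + y)
    simp only [map_add, LinearMap.add_apply, hanti] at h
    linear_combination (norm := module) h
  -- dual bases with respect to the form ψ
  set n := Module.finrank F L with hn
  set e : Module.Basis (Fin n) F L := Module.finBasis F L with he
  set ψe : L ≃ₗ[F] Module.Dual F L := LinearEquiv.ofBijective ψ hψbij with hψe
  have hψe_apply : ∀ x, ψe x = ψ x := fun _ => rfl
  set d : Module.Basis (Fin n) F L := e.dualBasis.map ψe.symm with hd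
  have hψd : ∀ i, ψ (d i) = e.dualBasis i := by
    intro i
    rw [hd, Module.Basis.map_apply, ← hψe_apply]
    exact ψe.apply_symm_apply _
  have exp1 : ∀ v, ∑ i, ψ (d i) v • e i = v := by
    intro v
    have hc : ∀ i, ψ (d i) v = e.repr v i := by
      intro i
      rw [hψd, Module.Basis.coe_dualBasis]
      exact e.coord_apply i v
    simp_rw [hc]
    exact e.sum_repr v
  have exp2 : ∀ v, ∑ i, ψ v (e i) • d i = v := by
    intro v
    apply ψe.injective
    rw [map_sum]
    have hc : ∀ i, ψe (ψ v (e i) • d i) = ψ v (e i) • e.dualBasis i := by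
      intro i
      rw [map_smul, hψe_apply, hψd]
    simp_rw [hc]
    have hh := e.dualBasis.sum_repr (ψ v)
    simp_rw [Module.Basis.dualBasis_repr] at hh
    rw [hh, hψe_apply]
  -- the `ω`-adjoint expansion coefficients
  set u : Fin n → L := fun k => -(e k) - R (e k) with hu
  have hcoefR : ∀ (k : Fin n) (w : L), ψ (R w) (e k) = ψ (u k) w := by
    intro k w
    simp only [hu, map_sub, map_neg, LinearMap.sub_apply, LinearMap.neg_apply]
    linear_combination hadj w (e k) + hsymm (e k) w + hsymm (R (e k)) w
  have hexpR : ∀ k, R (e k) = ∑ j, ψ (u j) (e k) • d j := by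
    intro k
    rw [← exp2 (R (e k))]
    exact Finset.sum_congr rfl fun j _ => by rw [hcoefR]
  -- the symmetric part of r is the negative of the Casimir tensor
  have hskew : ∑ i, (d i ⊗ₜ[F] R (e i) + R (e i) ⊗ₜ[F] d i) = -∑ i, d i ⊗ₜ[F] e i := by
    have hzero : ∀ i j : Fin n, ψ (u j) (e i) + ψ (u i) (e j) + ψ (e i) (e j) = 0 := by
      intro i j
      simp only [hu, map_sub, map_neg, LinearMap.sub_apply, LinearMap.neg_apply]
      linear_combination -hadj (e i) (e j) - hsymm (e j) (e i) - hsymm (R (e j)) (e i)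
    have hA : ∀ i : Fin n, (d i ⊗ₜ[F] R (e i) : L ⊗[F] L)
        = ∑ j, ψ (u j) (e i) • (d i ⊗ₜ[F] d j) := by
      intro i
      rw [hexpR i, tmul_sum]
      exact Finset.sum_congr rfl fun j _ => tmul_smul _ _ _
    have hB : ∀ i : Fin n, (R (e i) ⊗ₜ[F] d i : L ⊗[F] L)
        = ∑ j, ψ (u j) (e i) • (d j ⊗ₜ[F] d i) := by
      intro i
      rw [hexpR i, sum_tmul]
      exact Finset.sum_congr rfl fun j _ => (smul_tmul' _ _ _)
    have hC : ∀ i : Fin n, (d i ⊗ₜ[F] e i : L ⊗[F] L)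
        = ∑ j, ψ (e i) (e j) • (d i ⊗ₜ[F] d j) := by
      intro i
      conv_lhs => rw [← exp2 (e i)]
      rw [tmul_sum]
      exact Finset.sum_congr rfl fun j _ => tmul_smul _ _ _
    have key : ∑ i, (d i ⊗ₜ[F] R (e i) + R (e i) ⊗ₜ[F] d i + d i ⊗ₜ[F] e i) = 0 := by
      calc ∑ i, (d i ⊗ₜ[F] R (e i) + R (e i) ⊗ₜ[F] d i + d i ⊗ₜ[F] e i)
          = (∑ i, ∑ j, ψ (u j) (e i) • (d i ⊗ₜ[F] d j))
            + (∑ i, ∑ j, ψ (u j) (e i) • (d j ⊗ₜ[F] d i))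
            + ∑ i, ∑ j, ψ (e i) (e j) • (d i ⊗ₜ[F] d j) := by
            rw [← Finset.sum_add_distrib, ← Finset.sum_add_distrib]
            exact Finset.sum_congr rfl fun i _ => by rw [hA, hB, hC]
        _ = (∑ i, ∑ j, ψ (u j) (e i) • (d i ⊗ₜ[F] d j))
            + (∑ i, ∑ j, ψ (u i) (e j) • (d i ⊗ₜ[F] d j))
            + ∑ i, ∑ j, ψ (e i) (e j) • (d i ⊗ₜ[F] d j) := by
            have hmid : (∑ i, ∑ j, ψ (u j) (e i) • (d j ⊗ₜ[F] d i))
                = ∑ i, ∑ j, ψ (u i) (e j) • (d i ⊗ₜ[F] d j) := Finset.sum_comm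
            rw [hmid]
        _ = ∑ i, ∑ j, (ψ (u j) (e i) + ψ (u i) (e j) + ψ (e i) (e j)) • (d i ⊗ₜ[F] d j) := by
            rw [← Finset.sum_add_distrib, ← Finset.sum_add_distrib]
            refine Finset.sum_congr rfl fun i _ => ?_
            rw [← Finset.sum_add_distrib, ← Finset.sum_add_distrib]
            refine Finset.sum_congr rfl fun j _ => ?_
            rw [add_smul, add_smul]
        _ = 0 := by
            simp_rw [hzero, zero_smul, Finset.sum_const_zero]
    rw [Finset.sum_add_distrib] at key
    linear_combination (norm := module) key
  -- nontriviality
  have hnL : Nontrivial L := by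
    obtain ⟨x, y, hxy⟩ := hsimple.1
    exact ⟨⟨x, 0, fun h => hxy (by rw [h]; simp)⟩⟩
  have hnpos : 0 < n := Module.finrank_pos
  have hCas : (∑ i, d i ⊗ₜ[F] e i) ≠ 0 := by
    intro h0
    set B := d.tensorProduct e with hB
    have hrep : ∀ i : Fin n, (d i ⊗ₜ[F] e i : L ⊗[F] L) = B (i, i) := by
      intro i
      rw [hB, Module.Basis.tensorProduct_apply]
    simp_rw [hrep] at h0
    have h1 := congrArg (fun t => (B.repr t) (⟨0, hnpos⟩, ⟨0, hnpos⟩)) h0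
    simp only [map_sum, Module.Basis.repr_self, map_zero, Finsupp.coe_zero, Pi.zero_apply,
      Finset.sum_apply', Finsupp.single_apply, Prod.mk.injEq, and_self,
      Finset.sum_ite_eq', Finset.mem_univ, if_true] at h1
    exact one_ne_zero h1
  -- invariance of the Casimir tensor
  have hWinv : ∀ c : L, ∑ i, (mul (d i) c ⊗ₜ[F] e i + d i ⊗ₜ[F] mul (e i) c) = 0 := by
    intro c
    have key : ∀ i j : Fin n, ψ (mul (d j) c) (e i) + ψ (d j) (mul (e i) c) = 0 := by
      intro i j
      rw [hassoc (d j) c (e i), hanti2 c (e i), map_neg]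
      exact neg_add_cancel _
    calc ∑ i, (mul (d i) c ⊗ₜ[F] e i + d i ⊗ₜ[F] mul (e i) c)
        = (∑ i, ∑ j, ψ (mul (d i) c) (e j) • (d j ⊗ₜ[F] e i))
          + ∑ i, ∑ j, ψ (d j) (mul (e i) c) • (d i ⊗ₜ[F] e j) := by
          rw [← Finset.sum_add_distrib]
          refine Finset.sum_congr rfl fun i _ => ?_
          congr 1
          · conv_lhs => rw [← exp2 (mul (d i) c)]
            rw [sum_tmul]
            exact Finset.sum_congr rfl fun j _ => smul_tmul' _ _ _
          · conv_lhs => rw [← exp1 (mul (e i) c)]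
            rw [tmul_sum]
            exact Finset.sum_congr rfl fun j _ => tmul_smul _ _ _
      _ = (∑ i, ∑ j, ψ (mul (d j) c) (e i) • (d i ⊗ₜ[F] e j))
          + ∑ i, ∑ j, ψ (d j) (mul (e i) c) • (d i ⊗ₜ[F] e j) := by
          have hmid : (∑ i, ∑ j, ψ (mul (d i) c) (e j) • (d j ⊗ₜ[F] e i))
              = ∑ i, ∑ j, ψ (mul (d j) c) (e i) • (d i ⊗ₜ[F] e j) := Finset.sum_comm
          rw [hmid]
      _ = ∑ i, ∑ j, (ψ (mul (d j) c) (e i) + ψ (d j) (mul (e i) c)) • (d i ⊗ₜ[F] e j) := by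
          rw [← Finset.sum_add_distrib]
          refine Finset.sum_congr rfl fun i _ => ?_
          rw [← Finset.sum_add_distrib]
          exact Finset.sum_congr rfl fun j _ => (add_smul _ _ _).symm
      _ = 0 := by simp_rw [key, zero_smul, Finset.sum_const_zero]
  -- assemble the conclusion
  refine ⟨n, (fun i => d i), (fun i => R (e i)), ?_, ?_, ?_, ψ, ?_, hsymm, hassoc, ?_⟩
  · -- the classical Yang–Baxter equation
    have cyc : ∀ a b c : L, ψ (mul a b) c = ψ (mul c a) b := by
      intro a b c
      calc ψ (mul a b) c = ψ c (mul a b) := hsymm _ _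
        _ = ψ (mul c a) b := (hassoc c a b).symm
    have GG : ∀ x y z : L, ψ (mul (-y - R y) (-z - R z)) x - ψ (mul (-z - R z) (R x)) y
        + ψ (mul (R x) (R y)) z = 0 := by
      intro x y z
      have t1 : ψ (mul (-y - R y) (-z - R z)) x = ψ (mul x (-y - R y)) (-z - R z) := cyc _ _ _
      have t2 : ψ (mul (-z - R z) (R x)) y = ψ (mul (R x) y) (-z - R z) :=
        (cyc _ _ _).trans (cyc _ _ _)
      have t3 : ψ (R (mul (R x) y + mul x (R y) + mul x y)) z
          = ψ (mul (R x) y + mul x (R y) + mul x y) (-z - R z) := by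
        have h := hadj (mul (R x) y + mul x (R y) + mul x y) z
        simp only [map_sub, map_neg, LinearMap.sub_apply, LinearMap.neg_apply]
        linear_combination h
      rw [t1, t2, hRB x y, t3]
      simp only [map_sub, map_neg, map_add, LinearMap.sub_apply, LinearMap.neg_apply,
        LinearMap.add_apply]
      ring
    -- term 1
    have hT1 : (∑ i, ∑ j, mul (d i) (d j) ⊗ₜ[F] (R (e i) ⊗ₜ[F] R (e j)))
        = ∑ p, ∑ q, ∑ r, ψ (mul (u q) (u r)) (e p) • (d p ⊗ₜ[F] (d q ⊗ₜ[F] d r)) := by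
      have e1 : ∀ i j, mul (d i) (d j) ⊗ₜ[F] (R (e i) ⊗ₜ[F] R (e j))
          = ∑ r, ψ (u r) (e j) • (mul (d i) (d j) ⊗ₜ[F] (R (e i) ⊗ₜ[F] d r)) := by
        intro i j
        conv_lhs => rw [hexpR j]
        simp only [tmul_sum, tmul_smul]
      have e2 : ∀ i r, (∑ j, ψ (u r) (e j) • (mul (d i) (d j) ⊗ₜ[F] (R (e i) ⊗ₜ[F] d r)))
          = mul (d i) (u r) ⊗ₜ[F] (R (e i) ⊗ₜ[F] d r) := by
        intro i r
        conv_rhs => rw [← exp2 (u r), map_sum, sum_tmul]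
        exact Finset.sum_congr rfl fun j _ => by rw [map_smul, smul_tmul']
      have e3 : ∀ i r, (mul (d i) (u r) ⊗ₜ[F] (R (e i) ⊗ₜ[F] d r))
          = ∑ q, ψ (u q) (e i) • (mul (d i) (u r) ⊗ₜ[F] (d q ⊗ₜ[F] d r)) := by
        intro i r
        conv_lhs => rw [hexpR i]
        rw [sum_tmul, tmul_sum]
        exact Finset.sum_congr rfl fun q _ => by rw [← smul_tmul', tmul_smul]
      have e4 : ∀ r q, (∑ i, ψ (u q) (e i) • (mul (d i) (u r) ⊗ₜ[F] (d q ⊗ₜ[F] d r)))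
          = mul (u q) (u r) ⊗ₜ[F] (d q ⊗ₜ[F] d r) := by
        intro r q
        conv_rhs => rw [← exp2 (u q), map_sum, LinearMap.sum_apply, sum_tmul]
        exact Finset.sum_congr rfl fun i _ => by
          rw [map_smul, LinearMap.smul_apply, smul_tmul']
      have e5 : ∀ q r, (mul (u q) (u r) ⊗ₜ[F] (d q ⊗ₜ[F] d r))
          = ∑ p, ψ (mul (u q) (u r)) (e p) • (d p ⊗ₜ[F] (d q ⊗ₜ[F] d r)) := by
        intro q r
        conv_lhs => rw [← exp2 (mul (u q) (u r))]
        rw [sum_tmul]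
        exact Finset.sum_congr rfl fun p _ => (smul_tmul' _ _ _)
      calc (∑ i, ∑ j, mul (d i) (d j) ⊗ₜ[F] (R (e i) ⊗ₜ[F] R (e j)))
          = ∑ i, ∑ r, ∑ j, ψ (u r) (e j) • (mul (d i) (d j) ⊗ₜ[F] (R (e i) ⊗ₜ[F] d r)) := by
            refine Finset.sum_congr rfl fun i _ => ?_
            rw [← Finset.sum_comm]
            exact Finset.sum_congr rfl fun j _ => e1 i j
        _ = ∑ i, ∑ r, mul (d i) (u r) ⊗ₜ[F] (R (e i) ⊗ₜ[F] d r) := by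
            exact Finset.sum_congr rfl fun i _ => Finset.sum_congr rfl fun r _ => e2 i r
        _ = ∑ i, ∑ r, ∑ q, ψ (u q) (e i) • (mul (d i) (u r) ⊗ₜ[F] (d q ⊗ₜ[F] d r)) := by
            exact Finset.sum_congr rfl fun i _ => Finset.sum_congr rfl fun r _ => e3 i r
        _ = ∑ r, ∑ q, ∑ i, ψ (u q) (e i) • (mul (d i) (u r) ⊗ₜ[F] (d q ⊗ₜ[F] d r)) := by
            rw [Finset.sum_comm]
            exact Finset.sum_congr rfl fun r _ => Finset.sum_comm
        _ = ∑ r, ∑ q, mul (u q) (u r) ⊗ₜ[F] (d q ⊗ₜ[F] d r) := by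
            exact Finset.sum_congr rfl fun r _ => Finset.sum_congr rfl fun q _ => e4 r q
        _ = ∑ r, ∑ q, ∑ p, ψ (mul (u q) (u r)) (e p) • (d p ⊗ₜ[F] (d q ⊗ₜ[F] d r)) := by
            exact Finset.sum_congr rfl fun r _ => Finset.sum_congr rfl fun q _ => e5 q r
        _ = ∑ p, ∑ q, ∑ r, ψ (mul (u q) (u r)) (e p) • (d p ⊗ₜ[F] (d q ⊗ₜ[F] d r)) := by
            rw [show (∑ r, ∑ q, ∑ p, ψ (mul (u q) (u r)) (e p) • (d p ⊗ₜ[F] (d q ⊗ₜ[F] d r)))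
                = ∑ q, ∑ r, ∑ p, ψ (mul (u q) (u r)) (e p) • (d p ⊗ₜ[F] (d q ⊗ₜ[F] d r))
              from Finset.sum_comm]
            rw [show (∑ q, ∑ r, ∑ p, ψ (mul (u q) (u r)) (e p) • (d p ⊗ₜ[F] (d q ⊗ₜ[F] d r)))
                = ∑ q, ∑ p, ∑ r, ψ (mul (u q) (u r)) (e p) • (d p ⊗ₜ[F] (d q ⊗ₜ[F] d r))
              from Finset.sum_congr rfl fun q _ => Finset.sum_comm]
            exact Finset.sum_comm
    -- term 2
    have hT2 : (∑ i, ∑ j, d i ⊗ₜ[F] (mul (d j) (R (e i)) ⊗ₜ[F] R (e j)))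
        = ∑ p, ∑ q, ∑ r, ψ (mul (u r) (R (e p))) (e q) • (d p ⊗ₜ[F] (d q ⊗ₜ[F] d r)) := by
      have e1 : ∀ i j, d i ⊗ₜ[F] (mul (d j) (R (e i)) ⊗ₜ[F] R (e j))
          = ∑ r, ψ (u r) (e j) • (d i ⊗ₜ[F] (mul (d j) (R (e i)) ⊗ₜ[F] d r)) := by
        intro i j
        conv_lhs => rw [hexpR j]
        simp only [tmul_sum, tmul_smul]
      have e2 : ∀ i r, (∑ j, ψ (u r) (e j) • (d i ⊗ₜ[F] (mul (d j) (R (e i)) ⊗ₜ[F] d r)))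
          = d i ⊗ₜ[F] (mul (u r) (R (e i)) ⊗ₜ[F] d r) := by
        intro i r
        conv_rhs => rw [← exp2 (u r), map_sum, LinearMap.sum_apply, sum_tmul, tmul_sum]
        exact Finset.sum_congr rfl fun j _ => by
          rw [map_smul, LinearMap.smul_apply, ← smul_tmul', tmul_smul]
      have e3 : ∀ i r, (d i ⊗ₜ[F] (mul (u r) (R (e i)) ⊗ₜ[F] d r))
          = ∑ p, ψ (d i) (e p) • (d p ⊗ₜ[F] (mul (u r) (R (e i)) ⊗ₜ[F] d r)) := by
        intro i r
        conv_lhs => rw [← exp2 (d i)]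
        rw [sum_tmul]
        exact Finset.sum_congr rfl fun p _ => (smul_tmul' _ _ _)
      have e4 : ∀ r p, (∑ i, ψ (d i) (e p) • (d p ⊗ₜ[F] (mul (u r) (R (e i)) ⊗ₜ[F] d r)))
          = d p ⊗ₜ[F] (mul (u r) (R (e p)) ⊗ₜ[F] d r) := by
        intro r p
        conv_rhs => rw [← exp1 (e p), map_sum, map_sum, sum_tmul, tmul_sum]
        exact Finset.sum_congr rfl fun i _ => by
          rw [map_smul, map_smul, ← smul_tmul', tmul_smul]
      have e5 : ∀ r p, (d p ⊗ₜ[F] (mul (u r) (R (e p)) ⊗ₜ[F] d r))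
          = ∑ q, ψ (mul (u r) (R (e p))) (e q) • (d p ⊗ₜ[F] (d q ⊗ₜ[F] d r)) := by
        intro r p
        conv_lhs => rw [← exp2 (mul (u r) (R (e p)))]
        rw [sum_tmul, tmul_sum]
        exact Finset.sum_congr rfl fun q _ => by rw [← smul_tmul', tmul_smul]
      calc (∑ i, ∑ j, d i ⊗ₜ[F] (mul (d j) (R (e i)) ⊗ₜ[F] R (e j)))
          = ∑ i, ∑ r, ∑ j, ψ (u r) (e j) • (d i ⊗ₜ[F] (mul (d j) (R (e i)) ⊗ₜ[F] d r)) := by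
            refine Finset.sum_congr rfl fun i _ => ?_
            rw [← Finset.sum_comm]
            exact Finset.sum_congr rfl fun j _ => e1 i j
        _ = ∑ i, ∑ r, d i ⊗ₜ[F] (mul (u r) (R (e i)) ⊗ₜ[F] d r) :=
            Finset.sum_congr rfl fun i _ => Finset.sum_congr rfl fun r _ => e2 i r
        _ = ∑ i, ∑ r, ∑ p, ψ (d i) (e p) • (d p ⊗ₜ[F] (mul (u r) (R (e i)) ⊗ₜ[F] d r)) :=
            Finset.sum_congr rfl fun i _ => Finset.sum_congr rfl fun r _ => e3 i r
        _ = ∑ r, ∑ p, ∑ i, ψ (d i) (e p) • (d p ⊗ₜ[F] (mul (u r) (R (e i)) ⊗ₜ[F] d r)) := by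
            rw [Finset.sum_comm]
            exact Finset.sum_congr rfl fun r _ => Finset.sum_comm
        _ = ∑ r, ∑ p, d p ⊗ₜ[F] (mul (u r) (R (e p)) ⊗ₜ[F] d r) :=
            Finset.sum_congr rfl fun r _ => Finset.sum_congr rfl fun p _ => e4 r p
        _ = ∑ r, ∑ p, ∑ q, ψ (mul (u r) (R (e p))) (e q) • (d p ⊗ₜ[F] (d q ⊗ₜ[F] d r)) :=
            Finset.sum_congr rfl fun r _ => Finset.sum_congr rfl fun p _ => e5 r p
        _ = ∑ p, ∑ q, ∑ r, ψ (mul (u r) (R (e p))) (e q) • (d p ⊗ₜ[F] (d q ⊗ₜ[F] d r)) := by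
            rw [show (∑ r, ∑ p, ∑ q, ψ (mul (u r) (R (e p))) (e q) • (d p ⊗ₜ[F] (d q ⊗ₜ[F] d r)))
                = ∑ p, ∑ r, ∑ q, ψ (mul (u r) (R (e p))) (e q) • (d p ⊗ₜ[F] (d q ⊗ₜ[F] d r))
              from Finset.sum_comm]
            exact Finset.sum_congr rfl fun p _ => Finset.sum_comm
    -- term 3
    have hT3 : (∑ i, ∑ j, d i ⊗ₜ[F] (d j ⊗ₜ[F] mul (R (e i)) (R (e j))))
        = ∑ p, ∑ q, ∑ r, ψ (mul (R (e p)) (R (e q))) (e r) • (d p ⊗ₜ[F] (d q ⊗ₜ[F] d r)) := by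
      have e1 : ∀ i j, d i ⊗ₜ[F] (d j ⊗ₜ[F] mul (R (e i)) (R (e j)))
          = ∑ q, ψ (d j) (e q) • (d i ⊗ₜ[F] (d q ⊗ₜ[F] mul (R (e i)) (R (e j)))) := by
        intro i j
        conv_lhs => rw [← exp2 (d j)]
        rw [sum_tmul, tmul_sum]
        exact Finset.sum_congr rfl fun q _ => by rw [← smul_tmul', tmul_smul]
      have e2 : ∀ i q, (∑ j, ψ (d j) (e q) • (d i ⊗ₜ[F] (d q ⊗ₜ[F] mul (R (e i)) (R (e j)))))
          = d i ⊗ₜ[F] (d q ⊗ₜ[F] mul (R (e i)) (R (e q))) := by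
        intro i q
        conv_rhs => rw [← exp1 (e q), map_sum, map_sum, tmul_sum, tmul_sum]
        exact Finset.sum_congr rfl fun j _ => by
          rw [map_smul, map_smul, tmul_smul, tmul_smul]
      have e3 : ∀ i q, (d i ⊗ₜ[F] (d q ⊗ₜ[F] mul (R (e i)) (R (e q))))
          = ∑ p, ψ (d i) (e p) • (d p ⊗ₜ[F] (d q ⊗ₜ[F] mul (R (e i)) (R (e q)))) := by
        intro i q
        conv_lhs => rw [← exp2 (d i)]
        rw [sum_tmul]
        exact Finset.sum_congr rfl fun p _ => (smul_tmul' _ _ _)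
      have e4 : ∀ q p, (∑ i, ψ (d i) (e p) • (d p ⊗ₜ[F] (d q ⊗ₜ[F] mul (R (e i)) (R (e q)))))
          = d p ⊗ₜ[F] (d q ⊗ₜ[F] mul (R (e p)) (R (e q))) := by
        intro q p
        conv_rhs => rw [← exp1 (e p), map_sum, map_sum, LinearMap.sum_apply, tmul_sum, tmul_sum]
        exact Finset.sum_congr rfl fun i _ => by
          rw [map_smul, map_smul, LinearMap.smul_apply, tmul_smul, tmul_smul]
      have e5 : ∀ q p, (d p ⊗ₜ[F] (d q ⊗ₜ[F] mul (R (e p)) (R (e q))))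
          = ∑ r, ψ (mul (R (e p)) (R (e q))) (e r) • (d p ⊗ₜ[F] (d q ⊗ₜ[F] d r)) := by
        intro q p
        conv_lhs => rw [← exp2 (mul (R (e p)) (R (e q)))]
        simp only [tmul_sum, tmul_smul]
      calc (∑ i, ∑ j, d i ⊗ₜ[F] (d j ⊗ₜ[F] mul (R (e i)) (R (e j))))
          = ∑ i, ∑ q, ∑ j, ψ (d j) (e q) • (d i ⊗ₜ[F] (d q ⊗ₜ[F] mul (R (e i)) (R (e j)))) := by
            refine Finset.sum_congr rfl fun i _ => ?_
            rw [← Finset.sum_comm]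
            exact Finset.sum_congr rfl fun j _ => e1 i j
        _ = ∑ i, ∑ q, d i ⊗ₜ[F] (d q ⊗ₜ[F] mul (R (e i)) (R (e q))) :=
            Finset.sum_congr rfl fun i _ => Finset.sum_congr rfl fun q _ => e2 i q
        _ = ∑ i, ∑ q, ∑ p, ψ (d i) (e p) • (d p ⊗ₜ[F] (d q ⊗ₜ[F] mul (R (e i)) (R (e q)))) :=
            Finset.sum_congr rfl fun i _ => Finset.sum_congr rfl fun q _ => e3 i q
        _ = ∑ q, ∑ p, ∑ i, ψ (d i) (e p) • (d p ⊗ₜ[F] (d q ⊗ₜ[F] mul (R (e i)) (R (e q)))) := by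
            rw [Finset.sum_comm]
            exact Finset.sum_congr rfl fun q _ => Finset.sum_comm
        _ = ∑ q, ∑ p, d p ⊗ₜ[F] (d q ⊗ₜ[F] mul (R (e p)) (R (e q))) :=
            Finset.sum_congr rfl fun q _ => Finset.sum_congr rfl fun p _ => e4 q p
        _ = ∑ q, ∑ p, ∑ r, ψ (mul (R (e p)) (R (e q))) (e r) • (d p ⊗ₜ[F] (d q ⊗ₜ[F] d r)) :=
            Finset.sum_congr rfl fun q _ => Finset.sum_congr rfl fun p _ => e5 q p
        _ = ∑ p, ∑ q, ∑ r, ψ (mul (R (e p)) (R (e q))) (e r) • (d p ⊗ₜ[F] (d q ⊗ₜ[F] d r)) :=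
            Finset.sum_comm
    show (∑ i, ∑ j, (mul (d i) (d j) ⊗ₜ[F] (R (e i) ⊗ₜ[F] R (e j))
        - d i ⊗ₜ[F] (mul (d j) (R (e i)) ⊗ₜ[F] R (e j))
        + d i ⊗ₜ[F] (d j ⊗ₜ[F] mul (R (e i)) (R (e j))))) = 0
    have hsplit : (∑ i, ∑ j, (mul (d i) (d j) ⊗ₜ[F] (R (e i) ⊗ₜ[F] R (e j))
        - d i ⊗ₜ[F] (mul (d j) (R (e i)) ⊗ₜ[F] R (e j))
        + d i ⊗ₜ[F] (d j ⊗ₜ[F] mul (R (e i)) (R (e j)))))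
        = (∑ i, ∑ j, mul (d i) (d j) ⊗ₜ[F] (R (e i) ⊗ₜ[F] R (e j)))
          - (∑ i, ∑ j, d i ⊗ₜ[F] (mul (d j) (R (e i)) ⊗ₜ[F] R (e j)))
          + ∑ i, ∑ j, d i ⊗ₜ[F] (d j ⊗ₜ[F] mul (R (e i)) (R (e j))) := by
      simp only [Finset.sum_add_distrib, Finset.sum_sub_distrib]
    rw [hsplit, hT1, hT2, hT3]
    rw [← Finset.sum_sub_distrib, ← Finset.sum_add_distrib]
    refine Finset.sum_eq_zero fun p _ => ?_
    rw [← Finset.sum_sub_distrib, ← Finset.sum_add_distrib]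
    refine Finset.sum_eq_zero fun q _ => ?_
    rw [← Finset.sum_sub_distrib, ← Finset.sum_add_distrib]
    refine Finset.sum_eq_zero fun r _ => ?_
    have hc : ψ (mul (u q) (u r)) (e p) - ψ (mul (u r) (R (e p))) (e q)
        + ψ (mul (R (e p)) (R (e q))) (e r) = 0 := by
      simp only [hu]
      exact GG (e p) (e q) (e r)
    have hz : (ψ (mul (u q) (u r)) (e p) - ψ (mul (u r) (R (e p))) (e q)
        + ψ (mul (R (e p)) (R (e q))) (e r)) • (d p ⊗ₜ[F] (d q ⊗ₜ[F] d r)) = 0 := by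
      rw [hc, zero_smul]
    rw [add_smul, sub_smul] at hz
    exact hz

  · -- non skew-symmetric
    intro heq
    apply hCas
    have h2 : ∑ i, (d i ⊗ₜ[F] R (e i) + R (e i) ⊗ₜ[F] d i) = 0 := by
      rw [Finset.sum_add_distrib, heq]
      abel
    rw [h2] at hskew
    rw [← neg_eq_zero]
    exact hskew.symm
  · -- invariance
    intro c
    set Ξ : L ⊗[F] L →ₗ[F] L ⊗[F] L :=
      LinearMap.rTensor L (mul.flip c) + LinearMap.lTensor L (mul.flip c) with hΞ
    have hterm : ∀ x y : L, Ξ (x ⊗ₜ[F] y) = mul x c ⊗ₜ[F] y + x ⊗ₜ[F] mul y c := by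
      intro x y
      simp [hΞ, LinearMap.rTensor_tmul, LinearMap.lTensor_tmul]
    calc ∑ i, (mul (d i) c ⊗ₜ[F] R (e i) + d i ⊗ₜ[F] mul (R (e i)) c
          + mul (R (e i)) c ⊗ₜ[F] d i + R (e i) ⊗ₜ[F] mul (d i) c)
        = ∑ i, Ξ (d i ⊗ₜ[F] R (e i) + R (e i) ⊗ₜ[F] d i) := by
          refine Finset.sum_congr rfl fun i _ => ?_
          rw [map_add, hterm, hterm]
          abel
      _ = Ξ (∑ i, (d i ⊗ₜ[F] R (e i) + R (e i) ⊗ₜ[F] d i)) := (map_sum Ξ _ _).symm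
      _ = Ξ (-∑ i, d i ⊗ₜ[F] e i) := by rw [hskew]
      _ = -∑ i, Ξ (d i ⊗ₜ[F] e i) := by rw [map_neg, map_sum]
      _ = -∑ i, (mul (d i) c ⊗ₜ[F] e i + d i ⊗ₜ[F] mul (e i) c) := by
          refine congrArg Neg.neg (Finset.sum_congr rfl fun i _ => hterm _ _)
      _ = 0 := by rw [hWinv c, neg_zero]
  · -- nondegeneracy
    intro x hx
    have : ψ x = 0 := LinearMap.ext hx
    exact hψbij.1 (by rw [this, map_zero])
  · -- representation of R by the form
    intro c
    rw [← hRapp]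
    conv_lhs => rw [← exp1 c]
    rw [map_sum]
    exact Finset.sum_congr rfl fun i _ => by rw [map_smul]
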